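/- Arithmetisation of the degree-reduced conjunction/disjunction is correct on binary assignments: for CPEs ψ₁, ψ₂ with free variables among x₁,...,x_k, and ⊛ ∈ {∧, ∨}, the polynomial ⟦δ_{x₁}···δ_{x_k}(conv(ψ₁) ⊛ conv(ψ₂))⟧ agrees with ⟦ψ₁ ⊛ ψ₂⟧ on every 0/1 assignment. -/
import Mathlib


open MvPolynomial

/-- Degree reduction `δ_x`: replaces every power `x^j` (`j ≥ 1`) in each monomial by `x`. -/
noncomputable def deltaRed {V F : Type*} [CommRing F] [DecidableEq V]
    (x : V) (p : MvPolynomial V F) : MvPolynomial V F :=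
  p.support.sum fun m => monomial (Finsupp.update m x (min (m x) 1)) (coeff m p)

/-- Partial evaluation `[x := a] p`: substitute the constant `a` for variable `x`. -/
noncomputable def pevalVar {V F : Type*} [CommRing F] [DecidableEq V]
    (x : V) (a : F) (p : MvPolynomial V F) : MvPolynomial V F :=
  aeval (fun y => if y = x then C a else X y) p

/-- A polynomial is multilinear if every variable has degree at most 1 in every monomial. -/
def Multilinear {V F : Type*} [CommSemiring F] (p : MvPolynomial V F) : Prop :=
  ∀ m ∈ p.support, ∀ x : V, m x ≤ 1

/-- Binary equivalence: `p` and `q` agree on all assignments with values in `{0,1}`. -/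
def BinaryEquiv {V F : Type*} [CommSemiring F] (p q : MvPolynomial V F) : Prop :=
  ∀ σ : V → F, (∀ x, σ x = 0 ∨ σ x = 1) → eval σ p = eval σ q

/-- A polynomial is binary if it takes values in `{0,1}` on all `{0,1}` assignments. -/
def BinaryPoly {V F : Type*} [CommSemiring F] (p : MvPolynomial V F) : Prop :=
  ∀ σ : V → F, (∀ x, σ x = 0 ∨ σ x = 1) → eval σ p = 0 ∨ eval σ p = 1

/-- Circuit with partial evaluation (CPE) over variables `Fin n`. -/
inductive CPE (n : ℕ) where
  | tru  : CPE n
  | fls  : CPE n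
  | var  (x : Fin n) : CPE n
  | not  (φ : CPE n) : CPE n
  | and  (φ ψ : CPE n) : CPE n
  | or   (φ ψ : CPE n) : CPE n
  | pev  (x : Fin n) (b : Bool) (φ : CPE n) : CPE n

/-- Boolean semantics `P_φ` of a CPE. -/
def CPE.sem {n : ℕ} : CPE n → (Fin n → Bool) → Bool
  | tru, _ => true
  | fls, _ => false
  | var x, σ => σ x
  | not φ, σ => !(φ.sem σ)
  | and φ ψ, σ => φ.sem σ && ψ.sem σ
  | or φ ψ, σ => φ.sem σ || ψ.sem σ
  | pev x b φ, σ => φ.sem (Function.update σ x b)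

/-- Arithmetisation `⟦φ⟧` of a CPE. -/
noncomputable def CPE.arith {n : ℕ} (F : Type*) [CommRing F] : CPE n → MvPolynomial (Fin n) F
  | tru => 1
  | fls => 0
  | var x => MvPolynomial.X x
  | not φ => 1 - φ.arith F
  | and φ ψ => φ.arith F * ψ.arith F
  | or φ ψ => φ.arith F + ψ.arith F - φ.arith F * ψ.arith F
  | pev x b φ => pevalVar x (if b then 1 else 0) (φ.arith F)

/-- Degree reduction over all variables `x₁, …, xₙ`. -/
noncomputable def deltaAll {n : ℕ} {F : Type*} [CommRing F]
    (p : MvPolynomial (Fin n) F) : MvPolynomial (Fin n) F :=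
  (List.finRange n).foldr deltaRed p

/-- Arithmetisation `⟦conv(φ)⟧` of the degree-reduced circuit `conv(φ)`. -/
noncomputable def convArith {n : ℕ} (F : Type*) [CommRing F] : CPE n → MvPolynomial (Fin n) F
  | .tru => 1
  | .fls => 0
  | .var x => MvPolynomial.X x
  | .not φ => 1 - convArith F φ
  | .and φ ψ => deltaAll (convArith F φ * convArith F ψ)
  | .or φ ψ => deltaAll (convArith F φ + convArith F ψ - convArith F φ * convArith F ψ)
  | .pev x b φ => pevalVar x (if b then 1 else 0) (convArith F φ)

lemma pow_binary {F : Type*} [CommRing F] {a : F} (ha : a = 0 ∨ a = 1)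
    {e : ℕ} (he : 1 ≤ e) : a ^ e = a := by
  rcases ha with h | h <;> subst h
  · rw [zero_pow (by omega)]
  · simp

lemma eval_deltaRed {V F : Type*} [CommRing F] [DecidableEq V]
    (x : V) (p : MvPolynomial V F) (σ : V → F) (hσ : ∀ y, σ y = 0 ∨ σ y = 1) :
    eval σ (deltaRed x p) = eval σ p := by
  conv_rhs => rw [p.as_sum]
  rw [deltaRed, map_sum, map_sum]
  refine Finset.sum_congr rfl fun m _ => ?_
  rw [eval_monomial, eval_monomial]
  congr 1
  by_cases hx : m x = 0
  · rw [hx, show min 0 1 = m x from hx.symm, Finsupp.update_self]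
  · have h1 : min (m x) 1 = 1 := by omega
    rw [h1]
    have hsupp : (Finsupp.update m x 1).support = m.support := by
      rw [Finsupp.support_update_ne_zero _ _ one_ne_zero]
      exact Finset.insert_eq_self.mpr (Finsupp.mem_support_iff.mpr hx)
    rw [Finsupp.prod, Finsupp.prod, hsupp]
    refine Finset.prod_congr rfl fun y _ => ?_
    by_cases hy : y = x
    · subst hy
      rw [Finsupp.coe_update, Function.update_self, pow_one,
        pow_binary (hσ y) (by omega)]
    · rw [Finsupp.coe_update, Function.update_of_ne hy]

lemma eval_deltaAll {n : ℕ} {F : Type*} [CommRing F]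
    (p : MvPolynomial (Fin n) F) (σ : Fin n → F) (hσ : ∀ y, σ y = 0 ∨ σ y = 1) :
    eval σ (deltaAll p) = eval σ p := by
  rw [deltaAll]
  induction List.finRange n with
  | nil => rfl
  | cons a l ih => rw [List.foldr_cons, eval_deltaRed _ _ _ hσ, ih]

/-- the arithmetisation of the degree-reduced conjunction (resp. disjunction)
of `conv(ψ₁)` and `conv(ψ₂)` agrees with `⟦ψ₁ ∧ ψ₂⟧` (resp. `⟦ψ₁ ∨ ψ₂⟧`) on all 0/1
assignments, assuming inductively `⟦conv(ψᵢ)⟧ ≡_b ⟦ψᵢ⟧`. -/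
theorem conv_binop_binaryEquiv {q : ℕ} [Fact q.Prime] {n : ℕ} (ψ₁ ψ₂ : CPE n)
    (h₁ : BinaryEquiv (convArith (ZMod q) ψ₁) (ψ₁.arith (ZMod q)))
    (h₂ : BinaryEquiv (convArith (ZMod q) ψ₂) (ψ₂.arith (ZMod q))) :
    BinaryEquiv (deltaAll (convArith (ZMod q) ψ₁ * convArith (ZMod q) ψ₂))
      ((ψ₁.and ψ₂).arith (ZMod q)) ∧
    BinaryEquiv (deltaAll (convArith (ZMod q) ψ₁ + convArith (ZMod q) ψ₂ -
        convArith (ZMod q) ψ₁ * convArith (ZMod q) ψ₂))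
      ((ψ₁.or ψ₂).arith (ZMod q)) := by
  constructor <;> intro σ hσ <;>
    simp only [CPE.arith, eval_deltaAll _ _ hσ, map_mul, map_add, map_sub,
      h₁ σ hσ, h₂ σ hσ]
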